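/- arXiv:1905.00343 — 6 statements merged into one kernel-verified Lean document; each statement's English description precedes it below -/
import Mathlib

section
/- (Mahler's determinant theorem.) Let K be a field of characteristic zero, let α₁, …, α_s ∈ K be distinct, and let n = (n₁, …, n_s) ∈ ℕ^s have all coordinates positive. Then the determinant of the s×s matrix whose i-th row is a_{n−e_i} equals ∏_{i=1}^s ( (n_i − 1)! · ∏_{k≠i} (α_i − α_k)^{n_k} ), and in particular it is nonzero. -/
/-!
Write `n = m + 1`. For `ρ = (j, r)` with `r ≤ mⱼ` let `h_ρ` be `f` with exponent `r` at `αⱼ` and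
`n_k` at every other node, so that `h_(j, mⱼ) = f_{n-eⱼ}`. The Hermite matrix
`(h_ρ^{(t)}(α_k))_{ρ, (k, t)}` is block diagonal with triangular blocks, so its determinant is
`∏ⱼ ∏_{r ≤ mⱼ} r! ∏_{k ≠ j} (αⱼ - α_k)^{n_k}`. Replacing every `h_ρ` by `E h_ρ = Σ_u h_ρ^{(u)}`
does not change it: `1 - d/dX` is unipotent on polynomials of degree `< Σ nᵢ` and inverts `E`.
Since `E p = p + (E p)'`, column operations turn every column of the new matrix except the top
derivative `t = m_k` at each node back into a plain derivative. The rows `f_{n-eⱼ}` vanish to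
order `m_k` at every `α_k`, so the result is block triangular: one diagonal block is the matrix
`(P_{n-eⱼ}(α_k))`, the other is the triangular Hermite matrix of the `h_(j, r)` with `r < mⱼ`,
and comparing determinants gives the formula.
-/

open Polynomial

/-- `f_m(z) = ∏ᵢ (z − αᵢ)^{mᵢ}`. -/
noncomputable def fpoly {K : Type*} [Field K] {s : ℕ} (α : Fin s → K) (m : Fin s → ℕ) :
    K[X] := ∏ i, (X - C (α i)) ^ m i

/-- `P_m(z) = Σ_{k=0}^{M} f_m^{(k)}(z)`, the sum of `f_m` and all its derivatives. -/
noncomputable def Ppoly {K : Type*} [Field K] {s : ℕ} (α : Fin s → K) (m : Fin s → ℕ) :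
    K[X] := ∑ k ∈ Finset.range (∑ i, m i + 1), derivative^[k] (fpoly α m)

/-- The Hermite approximation `a_m = (P_m(α₁), …, P_m(α_s))`. -/
noncomputable def aH {K : Type*} [Field K] {s : ℕ} (α : Fin s → K) (m : Fin s → ℕ) :
    Fin s → K := fun i => (Ppoly α m).eval (α i)

open Finset Function

section LinearAlgebra

theorem Matrix.det_sigma_of_upperTriangular {R : Type*} [CommRing R] {ι : Type*} [Fintype ι]
    [LinearOrder ι] {α : ι → Type*} [∀ i, Fintype (α i)] [∀ i, LinearOrder (α i)]
    (M : Matrix (Σ i, α i) (Σ i, α i) R) (hM : ∀ a b, ¬a ≤ b → M a b = 0) :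
    M.det = ∏ a, M a a := by
  have hlex : ∀ a b : Σ i, α i, a ≤ b → toLex a ≤ toLex b := by
    rintro _ _ ⟨i, x, y, hxy⟩
    exact Sigma.Lex.right _ _ hxy
  rw [← det_submatrix_equiv_self ofLex M, det_of_isUpperTriangular]
  · exact Fintype.prod_equiv ofLex _ _ fun _ => rfl
  · exact fun a b hba => hM _ _ fun hab => (hlex _ _ hab).not_gt hba

open scoped Classical in
theorem Matrix.det_sigma_ite_le {R : Type*} [CommRing R] {ι : Type*} [Fintype ι]
    [LinearOrder ι] {α : ι → Type*} [∀ i, Fintype (α i)] [∀ i, LinearOrder (α i)] :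
    (Matrix.of fun a b : Σ i, α i => if b ≤ a then (1 : R) else 0).det = 1 := by
  rw [← det_transpose, det_sigma_of_upperTriangular]
  · simp
  · intro a b h
    simp [h]

theorem LinearMap.det_one_sub_of_isNilpotent {K V : Type*} [Field K] [AddCommGroup V]
    [Module K V] [FiniteDimensional K V] {N : Module.End K V} (hN : IsNilpotent N) :
    LinearMap.det (1 - N) = 1 := by
  simpa [hN.charpoly_eq_X_pow_finrank] using (N.eval_charpoly 1).symm

theorem Matrix.det_of_apply_comp {K V ι : Type*} [Field K] [AddCommGroup V] [Module K V]
    [FiniteDimensional K V] [Fintype ι] [DecidableEq ι]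
    (hV : Module.finrank K V = Fintype.card ι) (Φ : V →ₗ[K] ι → K) (T : Module.End K V)
    (v : ι → V) :
    (Matrix.of fun i j => Φ (T (v i)) j).det =
      LinearMap.det T * (Matrix.of fun i j => Φ (v i) j).det := by
  have hmat : ∀ w : ι → V, (Matrix.of fun i j => Φ (w i) j).det =
      LinearMap.det (Φ ∘ₗ Fintype.linearCombination K w) := by
    intro w
    rw [← LinearMap.det_toMatrix', ← det_transpose]
    congr 1
    ext i j
    simp [LinearMap.toMatrix'_apply, Fintype.linearCombination_apply_single]
  have hT : Fintype.linearCombination K (fun i => T (v i)) =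
      T ∘ₗ Fintype.linearCombination K v := by
    ext
    simp [Fintype.linearCombination_apply_single]
  let e : V ≃ₗ[K] ι → K := LinearEquiv.ofFinrankEq _ _ (by simpa using hV)
  set L := Fintype.linearCombination K v
  rw [hmat, hmat]
  calc LinearMap.det (Φ ∘ₗ Fintype.linearCombination K fun i => T (v i))
      = LinearMap.det ((Φ ∘ₗ e.symm.toLinearMap) ∘ₗ
          (e.toLinearMap ∘ₗ T ∘ₗ e.symm.toLinearMap) ∘ₗ (e.toLinearMap ∘ₗ L)) := by
        rw [hT]
        congr 1
        ext
        simp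
    _ = LinearMap.det T *
          LinearMap.det ((Φ ∘ₗ e.symm.toLinearMap) ∘ₗ (e.toLinearMap ∘ₗ L)) := by
        rw [LinearMap.det_comp, LinearMap.det_comp, LinearMap.det_comp, LinearMap.det_conj]
        ring
    _ = LinearMap.det T * LinearMap.det (Φ ∘ₗ L) := by
        congr 2
        ext
        simp

end LinearAlgebra

section SumIDeriv

variable {R : Type*} [Semiring R] (p : R[X])

theorem Polynomial.iterate_derivative_sumIDeriv {t T : ℕ} (h : t ≤ T) :
    derivative^[t] (sumIDeriv p) =
      ∑ u ∈ Ico t T, derivative^[u] p + derivative^[T] (sumIDeriv p) := by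
  induction T, h using Nat.le_induction with
  | base => simp
  | succ T hT ih =>
    rw [ih, sum_Ico_succ_top hT, add_assoc]
    congr 1
    conv_lhs => rw [sumIDeriv_eq_self_add p]
    rw [iterate_map_add, ← iterate_succ_apply]

theorem Polynomial.natDegree_sumIDeriv_le : (sumIDeriv p).natDegree ≤ p.natDegree := by
  rw [sumIDeriv_apply]
  exact natDegree_sum_le_of_forall_le _ _ fun i _ =>
    (natDegree_iterate_derivative p i).trans tsub_le_self

end SumIDeriv

section Fpoly

variable {K : Type*} [Field K] {s : ℕ} (α : Fin s → K) (m : Fin s → ℕ)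

theorem fpoly_eq_mul_prod_erase (k : Fin s) :
    fpoly α m = (X - C (α k)) ^ m k * ∏ i ∈ univ.erase k, (X - C (α i)) ^ m i :=
  (mul_prod_erase _ _ (mem_univ k)).symm

theorem eval_iterate_derivative_fpoly_of_lt {k : Fin s} {t : ℕ} (ht : t < m k) :
    (derivative^[t] (fpoly α m)).eval (α k) = 0 := by
  rw [← coe_aeval_eq_eval]
  exact aeval_iterate_derivative_of_lt _ _ _ (by simpa using fpoly_eq_mul_prod_erase α m k) ht

theorem eval_iterate_derivative_fpoly_self (k : Fin s) :
    (derivative^[m k] (fpoly α m)).eval (α k) =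
      (m k).factorial * ∏ i ∈ univ.erase k, (α k - α i) ^ m i := by
  rw [← coe_aeval_eq_eval, aeval_iterate_derivative_self (fpoly α m) (m k) (α k)
    (by simpa using fpoly_eq_mul_prod_erase α m k)]
  simp [eval_prod]

theorem natDegree_fpoly : (fpoly α m).natDegree = ∑ i, m i := by
  simp [fpoly, natDegree_prod_of_monic, Monic.pow, monic_X_sub_C]

theorem natDegree_fpoly_update_lt {j : Fin s} {r : ℕ} (hr : r < m j) :
    (fpoly α (update m j r)).natDegree < ∑ i, m i := by
  rw [natDegree_fpoly]
  refine sum_lt_sum (fun i _ => ?_) ⟨j, mem_univ j, by simpa using hr⟩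
  rcases eq_or_ne i j with rfl | hij
  · simpa using hr.le
  · simp [hij]

theorem Ppoly_eq_sumIDeriv : Ppoly α m = sumIDeriv (fpoly α m) :=
  (sumIDeriv_apply_of_le (natDegree_fpoly α m).le).symm

theorem aH_eq_eval_iterate_derivative {k : Fin s} {T : ℕ} (hT : T ≤ m k) :
    aH α m k = (derivative^[T] (sumIDeriv (fpoly α m))).eval (α k) := by
  change (Ppoly α m).eval (α k) = _
  rw [Ppoly_eq_sumIDeriv]
  conv_lhs => rw [← iterate_zero_apply derivative (sumIDeriv (fpoly α m)),
    iterate_derivative_sumIDeriv _ (Nat.zero_le T)]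
  rw [eval_add, eval_finsetSum, sum_eq_zero, zero_add]
  exact fun u hu => eval_iterate_derivative_fpoly_of_lt _ _ ((mem_Ico.1 hu).2.trans_le hT)

end Fpoly

section Hermite

variable {K : Type*} [Field K] {s : ℕ} (α : Fin s → K)

noncomputable def hermiteMatrix {ι : Type*} (n : Fin s → ℕ) (g : ι → K[X]) :
    Matrix ι (Σ k, Fin (n k)) K :=
  Matrix.of fun ρ c => (derivative^[c.2] (g ρ)).eval (α c.1)

noncomputable def hermiteMatrixSumIDerivLast {ι : Type*} (m : Fin s → ℕ) (g : ι → K[X]) :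
    Matrix ι (Σ k, Fin (m k + 1)) K :=
  Matrix.of fun ρ c =>
    (derivative^[c.2] (if c.2 = Fin.last _ then sumIDeriv (g ρ) else g ρ)).eval (α c.1)

variable (K) in
noncomputable def derivativeDegreeLT (M : ℕ) : Module.End K K[X]_M :=
  derivative.restrict fun _ hp =>
    mem_degreeLT.2 (degree_derivative_le.trans_lt (mem_degreeLT.1 hp))

variable (K) in
theorem isNilpotent_derivativeDegreeLT (M : ℕ) : IsNilpotent (derivativeDegreeLT K M) := by
  refine ⟨M, ?_⟩
  rw [derivativeDegreeLT, Module.End.pow_restrict]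
  ext ⟨p, hp⟩ : 2
  by_cases h0 : p = 0
  · simp [h0]
  · simpa [Module.End.pow_apply] using
      iterate_derivative_eq_zero ((natDegree_lt_iff_degree_lt h0).2 (mem_degreeLT.1 hp))

/-- `1 - derivative` is unipotent on `K[X]_M` and sends `sumIDeriv p` back to `p`. -/
theorem det_hermiteMatrix_sumIDeriv (n : Fin s → ℕ) (g : (Σ k, Fin (n k)) → K[X])
    (hg : ∀ ρ, (g ρ).natDegree < ∑ k, n k) :
    (hermiteMatrix α n fun ρ => sumIDeriv (g ρ)).det = (hermiteMatrix α n g).det := by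
  set M := ∑ k, n k
  have hmem : ∀ p : K[X], p.natDegree < M → p ∈ K[X]_M := fun p hp =>
    mem_degreeLT.2 (degree_le_natDegree.trans_lt (by exact_mod_cast hp))
  let v : (Σ k, Fin (n k)) → K[X]_M := fun ρ =>
    ⟨sumIDeriv (g ρ), hmem _ ((natDegree_sumIDeriv_le _).trans_lt (hg ρ))⟩
  let Φ : K[X]_M →ₗ[K] (Σ k, Fin (n k)) → K := LinearMap.pi fun c =>
    leval (α c.1) ∘ₗ (derivative ^ (c.2 : ℕ)) ∘ₗ (K[X]_M).subtype
  have hV : Module.finrank K K[X]_M = Fintype.card (Σ k, Fin (n k)) := by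
    simp [Module.finrank_eq_card_basis (degreeLT.basis K M), M]
  have key := Matrix.det_of_apply_comp hV Φ (1 - derivativeDegreeLT K M) v
  rw [LinearMap.det_one_sub_of_isNilpotent (isNilpotent_derivativeDegreeLT K M), one_mul] at key
  convert key.symm using 2 <;> ext ρ c
  · simp [hermiteMatrix, Φ, v, Module.End.pow_apply]
  · simp only [hermiteMatrix, Φ, v, derivativeDegreeLT, Matrix.of_apply, LinearMap.pi_apply,
      LinearMap.comp_apply, LinearMap.sub_apply, Module.End.one_apply, LinearMap.restrict_apply,
      Submodule.subtype_apply, Submodule.coe_sub, Module.End.pow_apply, leval_apply]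
    rw [sub_eq_iff_eq_add.2 (sumIDeriv_eq_self_add (g ρ))]

open scoped Classical in
theorem hermiteMatrix_sumIDeriv_eq_mul {ι : Type*} (m : Fin s → ℕ) (g : ι → K[X]) :
    hermiteMatrix α (fun k => m k + 1) (fun ρ => sumIDeriv (g ρ)) =
      hermiteMatrixSumIDerivLast α m g *
        Matrix.of fun a b : Σ k, Fin (m k + 1) => if b ≤ a then (1 : K) else 0 := by
  ext ρ ⟨k, t⟩
  simp only [hermiteMatrix, hermiteMatrixSumIDerivLast, Matrix.mul_apply, Matrix.of_apply,
    mul_ite, mul_one, mul_zero, Fintype.sum_sigma]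
  rw [sum_eq_single k (fun k' _ hk' => sum_eq_zero fun u _ =>
    if_neg fun h => hk' (Sigma.le_def.1 h).1.symm) (by simp)]
  simp only [Sigma.mk_le_mk_iff, Fin.sum_univ_castSucc, Fin.castSucc_ne_last, if_false,
    if_pos (Fin.le_last t), if_true]
  rw [iterate_derivative_sumIDeriv _ (Nat.lt_succ_iff.1 t.2), eval_add, eval_finsetSum]
  congr 1
  simp only [Fin.le_def, Fin.val_castSucc]
  rw [Fin.sum_univ_eq_sum_range
    (fun u => if (t : ℕ) ≤ u then (derivative^[u] (g ρ)).eval (α k) else 0), ← sum_filter]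
  congr 1
  ext u
  simp only [mem_Ico, mem_filter, mem_range]
  omega

theorem det_hermiteMatrixSumIDerivLast (m : Fin s → ℕ) (g : (Σ k, Fin (m k + 1)) → K[X])
    (hg : ∀ ρ, (g ρ).natDegree < ∑ k, (m k + 1)) :
    (hermiteMatrixSumIDerivLast α m g).det = (hermiteMatrix α (fun k => m k + 1) g).det := by
  rw [← det_hermiteMatrix_sumIDeriv α _ g hg, hermiteMatrix_sumIDeriv_eq_mul, Matrix.det_mul,
    Matrix.det_sigma_ite_le, mul_one]

theorem det_hermiteMatrix_fpoly_update (m n : Fin s → ℕ) (hmn : ∀ k, m k ≤ n k) :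
    (hermiteMatrix α m fun ρ : Σ j, Fin (m j) => fpoly α (update n ρ.1 ρ.2)).det =
      ∏ j, ∏ r : Fin (m j), ((r : ℕ).factorial * ∏ i ∈ univ.erase j, (α j - α i) ^ n i) := by
  rw [Matrix.det_sigma_of_upperTriangular, Fintype.prod_sigma]
  · refine prod_congr rfl fun j _ => prod_congr rfl fun r _ => ?_
    have hdiag := eval_iterate_derivative_fpoly_self α (update n j r) j
    rw [update_self] at hdiag
    simp only [hermiteMatrix, Matrix.of_apply, hdiag]
    congr 1
    exact prod_congr rfl fun i hi => by rw [update_of_ne (ne_of_mem_erase hi)]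
  · rintro ⟨j, r⟩ ⟨k, t⟩ hle
    refine eval_iterate_derivative_fpoly_of_lt _ _ ?_
    rcases eq_or_ne k j with rfl | hkj
    · simpa using hle
    · rw [update_of_ne hkj]
      exact t.2.trans_le (hmn k)

theorem det_hermiteMatrixSumIDerivLast_fpoly_update (m : Fin s → ℕ) :
    (hermiteMatrixSumIDerivLast α m fun ρ : Σ j, Fin (m j + 1) =>
        fpoly α (update (fun k => m k + 1) ρ.1 ρ.2)).det =
      (Matrix.of fun j k => aH α (update (fun k => m k + 1) j (m j)) k).det *
      (hermiteMatrix α m fun ρ : Σ j, Fin (m j) =>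
        fpoly α (update (fun k => m k + 1) ρ.1 ρ.2)).det := by
  set G := hermiteMatrixSumIDerivLast α m fun ρ : Σ j, Fin (m j + 1) =>
    fpoly α (update (fun k => m k + 1) ρ.1 ρ.2)
  let e : Fin s ⊕ (Σ j, Fin (m j)) ≃ Σ j, Fin (m j + 1) :=
    { toFun := Sum.elim (fun j => ⟨j, Fin.last _⟩) fun ρ => ⟨ρ.1, ρ.2.castSucc⟩
      invFun := fun ρ => Fin.lastCases (Sum.inl ρ.1) (fun r => Sum.inr ⟨ρ.1, r⟩) ρ.2
      left_inv := by rintro (j | ⟨j, r⟩) <;> simp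
      right_inv := by
        rintro ⟨j, r⟩
        induction r using Fin.lastCases <;> simp }
  have hord : ∀ j k, m k ≤ update (fun k => m k + 1) j (m j) k := by
    intro j k
    rcases eq_or_ne k j with rfl | hkj <;> simp [*]
  have hblocks : G.submatrix e e = Matrix.fromBlocks
      (Matrix.of fun j k => aH α (update (fun k => m k + 1) j (m j)) k) 0
      (Matrix.of fun ρ k => G (e (.inr ρ)) (e (.inl k)))
      (hermiteMatrix α m fun ρ : Σ j, Fin (m j) =>
        fpoly α (update (fun k => m k + 1) ρ.1 ρ.2)) := by
    ext (j | ⟨j, r⟩) (k | ⟨k, t⟩)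
    · simpa [G, e, hermiteMatrixSumIDerivLast] using
        (aH_eq_eval_iterate_derivative α _ (hord j k)).symm
    · simpa [G, e, hermiteMatrixSumIDerivLast] using
        eval_iterate_derivative_fpoly_of_lt α _ (t.2.trans_le (hord j k))
    · rfl
    · simp [G, e, hermiteMatrixSumIDerivLast, hermiteMatrix]
  rw [← Matrix.det_submatrix_equiv_self e, hblocks, Matrix.det_fromBlocks_zero₁₂]

end Hermite

/-- **Mahler.** For `n` with all coordinates positive, the determinant of
the matrix whose `i`-th row is `a_{n−eᵢ}` equals
`∏ᵢ (nᵢ−1)! ∏_{k≠i} (αᵢ−α_k)^{n_k}`, and in particular it is nonzero. -/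
theorem stmt2 {K : Type*} [Field K] [CharZero K] {s : ℕ} (α : Fin s → K)
    (hα : Function.Injective α) (n : Fin s → ℕ) (hn : ∀ i, 0 < n i) :
    Matrix.det (Matrix.of fun i j =>
        aH α (fun k => n k - if k = i then 1 else 0) j) =
      ∏ i, (((n i - 1).factorial : K) *
        ∏ k ∈ Finset.univ.erase i, (α i - α k) ^ n k) ∧
    Matrix.det (Matrix.of fun i j =>
        aH α (fun k => n k - if k = i then 1 else 0) j) ≠ 0 := by
  obtain ⟨m, rfl⟩ : ∃ m : Fin s → ℕ, n = fun j => m j + 1 :=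
    ⟨fun j => n j - 1, funext fun j => (Nat.sub_add_cancel (hn j)).symm⟩
  have hrow : ∀ i, (fun k => m k + 1 - if k = i then 1 else 0) =
      update (fun k => m k + 1) i (m i) := by
    intro i
    funext k
    rcases eq_or_ne k i with rfl | hki <;> simp [*]
  simp only [hrow, Nat.add_sub_cancel]
  set c : Fin s → K := fun j => ∏ k ∈ univ.erase j, (α j - α k) ^ (m k + 1)
  have hterm : ∀ j (r : ℕ), (r.factorial : K) * c j ≠ 0 := fun j r =>
    mul_ne_zero (Nat.cast_ne_zero.2 r.factorial_ne_zero) <| prod_ne_zero_iff.2 fun k hk =>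
      pow_ne_zero _ (sub_ne_zero.2 (hα.ne (ne_of_mem_erase hk).symm))
  have key := det_hermiteMatrixSumIDerivLast_fpoly_update α m
  rw [det_hermiteMatrixSumIDerivLast α m _ fun ρ => natDegree_fpoly_update_lt α _ ρ.2.2,
    det_hermiteMatrix_fpoly_update α _ _ fun _ => le_rfl,
    det_hermiteMatrix_fpoly_update α m (fun k => m k + 1) fun k => Nat.le_succ _] at key
  have hsplit : ∏ j, ∏ r : Fin (m j + 1), ((r : ℕ).factorial * c j) =
      (∏ j, ∏ r : Fin (m j), ((r : ℕ).factorial * c j)) * ∏ j, ((m j).factorial * c j) := by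
    rw [← prod_mul_distrib]
    exact prod_congr rfl fun j _ => by simp [Fin.prod_univ_castSucc]
  have hN : ∏ j, ∏ r : Fin (m j), ((r : ℕ).factorial * c j) ≠ 0 :=
    prod_ne_zero_iff.2 fun j _ => prod_ne_zero_iff.2 fun r _ => hterm j r
  rw [hsplit, mul_comm] at key
  have hA := mul_right_cancel₀ hN key.symm
  exact ⟨hA, hA ▸ prod_ne_zero_iff.2 fun j _ => hterm j (m j)⟩
end

section
/- Let F be a field, let α₁, …, α_s ∈ F be distinct, let n₁, …, n_s ≥ 1 be integers with sum N, and set f(z) = ∏_{i=1}^s (z − α_i)^{n_i}. Suppose the derivative factors as f′(z) = N·∏_{i=1}^s (z − α_i)^{n_i − 1} · ∏_{j=1}^p (z − β_j)^{m_j}, where β₁, …, β_p ∈ F are distinct elements, none equal to any α_i, and m₁, …, m_p ≥ 1 (so m₁ + ⋯ + m_p = s − 1). Then N^N · ∏_{j=1}^p f(β_j)^{m_j} = ∏_{i=1}^s ( n_i^{n_i} · ∏_{k≠i} (α_i − α_k)^{n_k} ). -/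
/-!
Write `f' = ∏ (X - αᵢ)^(nᵢ - 1) · g` with `g = ∑ nᵢ ∏_{k ≠ i} (X - αₖ)`. The hypothesis on `f'` says
`g = N · Q` with `Q = ∏ (X - βⱼ)^mⱼ`, and evaluating at `αᵢ` gives `nᵢ ∏_{k ≠ i} (αᵢ - αₖ) = N · Q(αᵢ)`.
Raising this to the `nᵢ` and multiplying over `i` yields the right-hand side up to the sign
`(-1)^((s-1) N)`, while exchanging the two products on the left (the symmetry of the resultant)
turns it into `(-1)^(N ∑ mⱼ) N^N ∏ Q(αᵢ)^nᵢ`. The signs agree: if `N ≠ 0` in `F`, comparing degrees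
in `g = N · Q` gives `∑ mⱼ = s - 1`, and otherwise both sides vanish.
-/

open Finset Polynomial

section
variable {ι κ M : Type*} [Fintype ι] [Fintype κ]

lemma Finset.prod_pow_prod_pow_comm [CommMonoid M] (x : ι → κ → M) (n : ι → ℕ) (m : κ → ℕ) :
    ∏ j, (∏ i, x i j ^ n i) ^ m j = ∏ i, (∏ j, x i j ^ m j) ^ n i := by
  simp only [← prod_pow, ← pow_mul]
  rw [prod_comm]
  simp_rw [mul_comm]

variable {R : Type*} [CommRing R]

lemma Finset.prod_pow_prod_sub_pow_comm (a : ι → R) (b : κ → R) (n : ι → ℕ) (m : κ → ℕ) :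
    ∏ j, (∏ i, (b j - a i) ^ n i) ^ m j =
      (-1) ^ ((∑ i, n i) * ∑ j, m j) * ∏ i, (∏ j, (a i - b j) ^ m j) ^ n i := by
  have (j : κ) : ∏ i, (b j - a i) ^ n i = (-1) ^ (∑ i, n i) * ∏ i, (a i - b j) ^ n i := by
    rw [← prod_pow_eq_pow_sum, ← prod_mul_distrib]
    exact prod_congr rfl fun i _ => by rw [← neg_sub, neg_pow]
  simp_rw [this, mul_pow, prod_mul_distrib, ← pow_mul, prod_pow_eq_pow_sum, ← mul_sum,
    prod_pow_prod_pow_comm (fun i j => a i - b j)]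

variable [DecidableEq ι]

lemma Finset.prod_prod_erase_sub_pow (a : ι → R) (n : ι → ℕ) :
    ∏ i, ∏ k ∈ univ.erase i, (a i - a k) ^ n k =
      (-1) ^ ((Fintype.card ι - 1) * ∑ i, n i) * ∏ i, (∏ k ∈ univ.erase i, (a i - a k)) ^ n i := by
  rw [prod_comm' (t' := univ) (s' := fun k => univ.erase k) (by simp [eq_comm])]
  have (k : ι) : ∏ i ∈ univ.erase k, (a i - a k) =
      (-1) ^ (Fintype.card ι - 1) * ∏ i ∈ univ.erase k, (a k - a i) := by
    rw [← card_univ, ← card_erase_of_mem (mem_univ k), ← prod_const, ← prod_mul_distrib]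
    exact prod_congr rfl fun i _ => by ring
  simp_rw [prod_pow, this, mul_pow, prod_mul_distrib, ← pow_mul, prod_pow_eq_pow_sum, mul_sum]
end

namespace Polynomial
variable {R ι : Type*} [CommRing R] [Fintype ι] [DecidableEq ι]

/-- The numerator of the logarithmic derivative `∑ nᵢ / (X - aᵢ)` of `∏ (X - aᵢ)^nᵢ`
over the common denominator `∏ (X - aᵢ)`. -/
noncomputable def logDerivNumerator (a : ι → R) (n : ι → ℕ) : R[X] :=
  ∑ i, C (n i : R) * ∏ k ∈ univ.erase i, (X - C (a k))

variable (a : ι → R) (n : ι → ℕ)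

theorem derivative_prod_X_sub_C_pow (hn : ∀ i, 1 ≤ n i) :
    derivative (∏ i, (X - C (a i)) ^ n i) =
      (∏ i, (X - C (a i)) ^ (n i - 1)) * logDerivNumerator a n := by
  rw [derivative_prod_finset, logDerivNumerator, mul_sum]
  refine sum_congr rfl fun i _ => ?_
  have hpow (k : ι) : (X - C (a k)) ^ n k = (X - C (a k)) ^ (n k - 1) * (X - C (a k)) :=
    (pow_sub_one_mul (by have := hn k; omega) _).symm
  rw [derivative_X_sub_C_pow,
    ← mul_prod_erase univ (fun k => (X - C (a k)) ^ (n k - 1)) (mem_univ i)]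
  simp_rw [hpow, prod_mul_distrib]
  ring

theorem eval_logDerivNumerator (i : ι) :
    (logDerivNumerator a n).eval (a i) = n i * ∏ k ∈ univ.erase i, (a i - a k) := by
  rw [logDerivNumerator, eval_finsetSum, sum_eq_single i]
  · simp [eval_prod]
  · intro k _ hki
    simp only [eval_mul, eval_prod, eval_sub, eval_X, eval_C]
    rw [prod_eq_zero (mem_erase.mpr ⟨Ne.symm hki, mem_univ i⟩) (sub_self _), mul_zero]
  · simp

theorem natDegree_logDerivNumerator_le :
    (logDerivNumerator a n).natDegree ≤ Fintype.card ι - 1 := by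
  refine natDegree_sum_le_of_forall_le _ _ fun i _ => (natDegree_C_mul_le _ _).trans ?_
  refine (natDegree_prod_le _ _).trans ?_
  refine (sum_le_card_nsmul _ _ 1 fun k _ => natDegree_X_sub_C_le (a k)).trans_eq ?_
  simp

theorem coeff_logDerivNumerator :
    (logDerivNumerator a n).coeff (Fintype.card ι - 1) = ∑ i, (n i : R) := by
  nontriviality R
  rw [logDerivNumerator, finsetSum_coeff]
  refine sum_congr rfl fun i _ => ?_
  have hmonic : (∏ k ∈ univ.erase i, (X - C (a k))).Monic :=
    monic_prod_of_monic _ _ fun k _ => monic_X_sub_C _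
  have hdeg : (∏ k ∈ univ.erase i, (X - C (a k))).natDegree = Fintype.card ι - 1 := by
    rw [natDegree_prod_of_monic _ _ fun k _ => monic_X_sub_C _]
    simp
  rw [coeff_C_mul, ← hdeg, hmonic.coeff_natDegree, mul_one]

theorem natDegree_logDerivNumerator (hn : (∑ i, (n i : R)) ≠ 0) :
    (logDerivNumerator a n).natDegree = Fintype.card ι - 1 :=
  (natDegree_logDerivNumerator_le a n).antisymm
    (le_natDegree_of_ne_zero (by rwa [coeff_logDerivNumerator]))

end Polynomial

theorem stmt6_general {F : Type*} [Field F] {s p : ℕ}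
    (α : Fin s → F)
    (n : Fin s → ℕ) (hn : ∀ i, 1 ≤ n i) (N : ℕ) (hN : N = ∑ i, n i)
    (f : F[X]) (hf : f = ∏ i, (X - C (α i)) ^ n i)
    (β : Fin p → F)
    (m : Fin p → ℕ)
    (hder : derivative f =
      C (N : F) * (∏ i, (X - C (α i)) ^ (n i - 1)) * ∏ j, (X - C (β j)) ^ m j) :
    (N : F) ^ N * ∏ j, f.eval (β j) ^ m j =
      ∏ i, ((n i : F) ^ n i * ∏ k ∈ Finset.univ.erase i, (α i - α k) ^ n k) := by
  set Q : F[X] := ∏ j, (X - C (β j)) ^ m j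
  have hQ : logDerivNumerator α n = C (N : F) * Q := by
    have hP : ∏ i, (X - C (α i)) ^ (n i - 1) ≠ 0 :=
      prod_ne_zero_iff.mpr fun i _ => pow_ne_zero _ (X_sub_C_ne_zero (α i))
    refine mul_left_cancel₀ hP ?_
    rw [← derivative_prod_X_sub_C_pow α n hn, ← hf, hder, mul_assoc, mul_left_comm]
  have hkey (i : Fin s) : (n i : F) * ∏ k ∈ univ.erase i, (α i - α k) = N * Q.eval (α i) := by
    rw [← eval_logDerivNumerator, hQ, eval_mul, eval_C]
  -- If `N ≠ 0` in `F`, the degrees in `logDerivNumerator α n = N · Q` force `∑ mⱼ = s - 1`.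
  have hsign : (-1 : F) ^ (N * ∑ j, m j) * (N : F) ^ N = (-1) ^ ((s - 1) * N) * (N : F) ^ N := by
    rcases eq_or_ne (N : F) 0 with hN0 | hN0
    · rcases eq_or_ne N 0 with h | h
      · simp [h]
      · simp [hN0, zero_pow h]
    have hdegQ : Q.natDegree = ∑ j, m j := by
      rw [natDegree_prod_of_monic _ _ fun j _ => (monic_X_sub_C _).pow _]
      simp
    have hsum : ∑ j, m j = s - 1 := by
      rw [← hdegQ, ← natDegree_C_mul hN0, ← hQ, natDegree_logDerivNumerator, Fintype.card_fin]
      exact_mod_cast hN ▸ hN0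
    rw [hsum, mul_comm N]
  calc (N : F) ^ N * ∏ j, f.eval (β j) ^ m j
      = (-1) ^ (N * ∑ j, m j) * (N : F) ^ N * ∏ i, Q.eval (α i) ^ n i := by
        simp only [hf, Q, eval_prod, eval_pow, eval_sub, eval_X, eval_C]
        rw [prod_pow_prod_sub_pow_comm, ← hN]
        ring
    _ = (-1) ^ ((s - 1) * N) * ∏ i, ((N : F) * Q.eval (α i)) ^ n i := by
        rw [hsign, mul_assoc, hN, ← prod_pow_eq_pow_sum, ← prod_mul_distrib]
        simp_rw [mul_pow]
    _ = _ := by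
        simp_rw [← hkey, mul_pow, prod_mul_distrib, prod_prod_erase_sub_pow, Fintype.card_fin,
          ← hN]
        ring

/-- **semi-resultant.** Let `F` be a field, `α₁,…,α_s ∈ F` distinct,
`n₁,…,n_s ≥ 1` with sum `N`, `f = ∏ (X−αᵢ)^{nᵢ}`.  If
`f′ = N ∏ (X−αᵢ)^{nᵢ−1} ∏ (X−βⱼ)^{mⱼ}` with `β₁,…,β_p` distinct, none equal to
any `αᵢ`, and `mⱼ ≥ 1`, then
`N^N ∏ⱼ f(βⱼ)^{mⱼ} = ∏ᵢ nᵢ^{nᵢ} ∏_{k≠i} (αᵢ−α_k)^{n_k}`. -/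
theorem stmt6 {F : Type*} [Field F] {s p : ℕ}
    (α : Fin s → F) (hα : Function.Injective α)
    (n : Fin s → ℕ) (hn : ∀ i, 1 ≤ n i) (N : ℕ) (hN : N = ∑ i, n i)
    (f : F[X]) (hf : f = ∏ i, (X - C (α i)) ^ n i)
    (β : Fin p → F) (hβ : Function.Injective β)
    (hβα : ∀ j i, β j ≠ α i)
    (m : Fin p → ℕ) (hm : ∀ j, 1 ≤ m j)
    (hder : derivative f =
      C (N : F) * (∏ i, (X - C (α i)) ^ (n i - 1)) * ∏ j, (X - C (β j)) ^ m j) :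
    (N : F) ^ N * ∏ j, f.eval (β j) ^ m j =
      ∏ i, ((n i : F) ^ n i * ∏ k ∈ Finset.univ.erase i, (α i - α k) ^ n k) :=
  stmt6_general α n hn N hN f hf β m hder
end

section
/- Let α₁, …, α_s ∈ ℂ be distinct, let n₁, …, n_s ≥ 1 be integers with sum N, set f(z) = ∏_{i=1}^s (z − α_i)^{n_i}, and suppose f′(z) = N·∏_{i=1}^s (z − α_i)^{n_i − 1} · ∏_{j=1}^p (z − β_j)^{m_j} with β₁, …, β_p ∈ ℂ distinct, none equal to any α_i, and m₁, …, m_p ≥ 1. Then N! · ∏_{j=1}^p |f(β_j)|^{m_j} ≤ ∏_{i=1}^s ( n_i! · ∏_{k≠i} |α_i − α_k|^{n_k} ). -/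
open Polynomial Finset

/-!
Put `q = ∏ⱼ (X - βⱼ)^{mⱼ}`. Cancelling `(X - αᵢ)^{nᵢ-1}` from both expressions for `f′` and
evaluating at `αᵢ` gives `N q(αᵢ) = nᵢ ∏_{k≠i} (αᵢ - α_k)`. Both `∏ⱼ |f(βⱼ)|^{mⱼ}` and
`∏ᵢ |q(αᵢ)|^{nᵢ}` equal `∏_{i,j} |αᵢ - βⱼ|^{nᵢ mⱼ}`, and `|αᵢ - α_k|` is symmetric, so the left
side is `N! ∏ᵢ (nᵢ/N)^{nᵢ} · ∏ᵢ ∏_{k≠i} |αᵢ - α_k|^{n_k}`. Finally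
`N! ∏ nᵢ^{nᵢ} ≤ N^N ∏ nᵢ!`, since `(N; n₁,…,n_s) ∏ nᵢ^{nᵢ}` is one term of the multinomial
expansion of `(∑ nᵢ)^N`.
-/

namespace Nat

theorem multinomial_mul_prod_pow_le {α : Type*} (s : Finset α) (f : α → ℕ) :
    multinomial s f * ∏ i ∈ s, f i ^ f i ≤ (∑ i ∈ s, f i) ^ ∑ i ∈ s, f i := by
  classical
  set g : α → ℕ := fun i => if i ∈ s then f i else 0
  have hfg : ∀ i ∈ s, f i = g i := fun i hi => (if_pos hi).symm
  have hg : g ∈ s.piAntidiag (∑ i ∈ s, f i) := by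
    refine mem_piAntidiag.2 ⟨(sum_congr rfl hfg).symm, fun i hi => ?_⟩
    by_contra h
    exact hi (if_neg h)
  calc multinomial s f * ∏ i ∈ s, f i ^ f i = multinomial s g * ∏ i ∈ s, f i ^ g i := by
        rw [multinomial_congr hfg, prod_congr rfl fun i hi => congrArg (f i ^ ·) (hfg i hi)]
    _ ≤ ∑ k ∈ s.piAntidiag (∑ i ∈ s, f i), multinomial s k * ∏ i ∈ s, f i ^ k i :=
        single_le_sum (f := fun k => multinomial s k * ∏ i ∈ s, f i ^ k i)
          (fun _ _ => Nat.zero_le _) hg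
    _ = _ := (sum_pow_eq_sum_piAntidiag s f _).symm

theorem factorial_sum_mul_prod_div_pow_le {α : Type*} (s : Finset α) (f : α → ℕ) :
    ((∑ i ∈ s, f i)! : ℝ) * ∏ i ∈ s, ((f i : ℝ) / (∑ i ∈ s, f i : ℕ)) ^ f i ≤
      ∏ i ∈ s, ((f i)! : ℝ) := by
  set N := ∑ i ∈ s, f i with hN
  have key : N ! * ∏ i ∈ s, f i ^ f i ≤ (∏ i ∈ s, (f i)!) * N ^ N := by
    rw [hN, ← multinomial_spec s f, mul_assoc]
    exact Nat.mul_le_mul_left _ (multinomial_mul_prod_pow_le s f)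
  simp_rw [div_pow]
  rw [prod_div_distrib, prod_pow_eq_pow_sum, ← hN, ← mul_div_assoc,
    div_le_iff₀ (by exact_mod_cast Nat.pow_self_pos)]
  exact_mod_cast key

end Nat

theorem Finset.prod_prod_erase_pow_comm {ι M : Type*} [Fintype ι] [DecidableEq ι]
    [CommMonoid M] (d : ι → ι → M) (hd : ∀ i k, d i k = d k i) (n : ι → ℕ) :
    ∏ i, ∏ k ∈ univ.erase i, d i k ^ n i = ∏ i, ∏ k ∈ univ.erase i, d i k ^ n k := by
  rw [prod_comm' (s' := fun k => univ.erase k) (t' := univ)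
    (by intro i k; simp [eq_comm, and_comm])]
  exact prod_congr rfl fun i _ => prod_congr rfl fun k _ => by rw [hd]

namespace Polynomial

theorem prod_norm_eval_prod_X_sub_C_pow_comm {K ι κ : Type*} [NormedField K]
    [Fintype ι] [Fintype κ] (α : ι → K) (n : ι → ℕ) (β : κ → K) (m : κ → ℕ) :
    ∏ j, ‖(∏ i, (X - C (α i)) ^ n i).eval (β j)‖ ^ m j =
      ∏ i, ‖(∏ j, (X - C (β j)) ^ m j).eval (α i)‖ ^ n i := by
  simp only [eval_prod, eval_pow, eval_sub, eval_X, eval_C, norm_prod, norm_pow, ← prod_pow]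
  rw [prod_comm]
  exact prod_congr rfl fun i _ => prod_congr rfl fun j _ => by
    rw [← pow_mul, ← pow_mul, mul_comm, norm_sub_rev]

theorem derivative_X_sub_C_pow_mul {R : Type*} [CommRing R] (a : R) {k : ℕ} (hk : 1 ≤ k)
    (g : R[X]) :
    derivative ((X - C a) ^ k * g) =
      (X - C a) ^ (k - 1) * (C (k : R) * g + (X - C a) * derivative g) := by
  obtain ⟨j, rfl⟩ := Nat.exists_eq_add_of_le' hk
  rw [derivative_mul, derivative_X_sub_C_pow, Nat.add_sub_cancel, pow_succ]
  ring

theorem mul_eval_eq_of_derivative_prod_X_sub_C_pow {K ι : Type*} [Field K] [Fintype ι]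
    [DecidableEq ι] {α : ι → K} (hα : Function.Injective α) {n : ι → ℕ} (hn : ∀ i, 1 ≤ n i)
    {c : K} {q : K[X]}
    (hder : derivative (∏ i, (X - C (α i)) ^ n i) =
      C c * (∏ i, (X - C (α i)) ^ (n i - 1)) * q) (i : ι) :
    c * q.eval (α i) = n i * ∏ k ∈ univ.erase i, (α i - α k) := by
  set g := ∏ k ∈ univ.erase i, (X - C (α k)) ^ n k
  set h := ∏ k ∈ univ.erase i, (X - C (α k)) ^ (n k - 1)
  have hcancel : C c * h * q = C (n i : K) * g + (X - C (α i)) * derivative g := by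
    apply mul_left_cancel₀ (pow_ne_zero (n i - 1) (X_sub_C_ne_zero (α i)))
    rw [← derivative_X_sub_C_pow_mul _ (hn i), mul_prod_erase univ (fun k => (X - C (α k)) ^ n k)
      (mem_univ i), hder, ← mul_prod_erase univ (fun k => (X - C (α k)) ^ (n k - 1)) (mem_univ i)]
    ring
  have hg : g.eval (α i) = h.eval (α i) * ∏ k ∈ univ.erase i, (α i - α k) := by
    simp only [g, h, eval_prod, eval_pow, eval_sub, eval_X, eval_C, ← prod_mul_distrib]
    exact prod_congr rfl fun k _ => (pow_sub_one_mul (by have := hn k; omega) _).symm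
  have hh : h.eval (α i) ≠ 0 := by
    simp only [h, eval_prod, eval_pow, eval_sub, eval_X, eval_C]
    exact prod_ne_zero_iff.2 fun k hk =>
      pow_ne_zero _ (sub_ne_zero.2 (hα.ne (ne_of_mem_erase hk).symm))
  apply mul_left_cancel₀ hh
  have := congrArg (eval (α i)) hcancel
  simp only [eval_mul, eval_add, eval_C, eval_sub, eval_X, sub_self, zero_mul, add_zero, hg] at this
  linear_combination this

end Polynomial

theorem stmt7_general {s p : ℕ}
    (α : Fin s → ℂ) (hα : Function.Injective α)
    (n : Fin s → ℕ) (hn : ∀ i, 1 ≤ n i) (N : ℕ) (hN : N = ∑ i, n i)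
    (f : ℂ[X]) (hf : f = ∏ i, (X - C (α i)) ^ n i)
    (β : Fin p → ℂ)
    (m : Fin p → ℕ)
    (hder : derivative f =
      C (N : ℂ) * (∏ i, (X - C (α i)) ^ (n i - 1)) * ∏ j, (X - C (β j)) ^ m j) :
    (N.factorial : ℝ) * ∏ j, ‖f.eval (β j)‖ ^ m j ≤
      ∏ i, (((n i).factorial : ℝ) *
        ∏ k ∈ Finset.univ.erase i, ‖α i - α k‖ ^ n k) := by
  set q := ∏ j, (X - C (β j)) ^ m j
  subst hf
  have hq : ∀ i, ‖q.eval (α i)‖ = (n i / N : ℝ) * ∏ k ∈ univ.erase i, ‖α i - α k‖ := by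
    intro i
    have hN0 : (N : ℝ) ≠ 0 :=
      Nat.cast_ne_zero.2 <| hN ▸ (sum_pos (fun k _ => hn k) ⟨i, mem_univ i⟩).ne'
    have := congrArg norm (mul_eval_eq_of_derivative_prod_X_sub_C_pow hα hn hder i)
    simp only [norm_mul, norm_prod, Complex.norm_natCast] at this
    rw [div_mul_eq_mul_div, eq_div_iff hN0, ← this, mul_comm]
  calc (N.factorial : ℝ) * ∏ j, ‖(∏ i, (X - C (α i)) ^ n i).eval (β j)‖ ^ m j
      = (N.factorial : ℝ) * ∏ i, ‖q.eval (α i)‖ ^ n i := by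
        rw [prod_norm_eval_prod_X_sub_C_pow_comm]
    _ = ((N.factorial : ℝ) * ∏ i, ((n i : ℝ) / N) ^ n i) *
          ∏ i, ∏ k ∈ univ.erase i, ‖α i - α k‖ ^ n k := by
        simp only [hq, mul_pow, prod_mul_distrib, ← prod_pow,
          prod_prod_erase_pow_comm _ (fun i k => norm_sub_rev (α i) (α k))]
        ring
    _ ≤ (∏ i, ((n i).factorial : ℝ)) * ∏ i, ∏ k ∈ univ.erase i, ‖α i - α k‖ ^ n k := by
        gcongr
        subst hN
        exact Nat.factorial_sum_mul_prod_div_pow_le univ n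
    _ = _ := prod_mul_distrib.symm

/-- Let `α₁,…,α_s ∈ ℂ` be distinct, `n₁,…,n_s ≥ 1` with sum `N`,
`f = ∏ (X−αᵢ)^{nᵢ}`, and suppose `f′ = N ∏ (X−αᵢ)^{nᵢ−1} ∏ (X−βⱼ)^{mⱼ}` with
`β₁,…,β_p` distinct, none equal to any `αᵢ`, and `mⱼ ≥ 1`.  Then
`N! ∏ⱼ |f(βⱼ)|^{mⱼ} ≤ ∏ᵢ nᵢ! ∏_{k≠i} |αᵢ−α_k|^{n_k}`. -/
theorem stmt7 {s p : ℕ}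
    (α : Fin s → ℂ) (hα : Function.Injective α)
    (n : Fin s → ℕ) (hn : ∀ i, 1 ≤ n i) (N : ℕ) (hN : N = ∑ i, n i)
    (f : ℂ[X]) (hf : f = ∏ i, (X - C (α i)) ^ n i)
    (β : Fin p → ℂ) (hβ : Function.Injective β)
    (hβα : ∀ j i, β j ≠ α i)
    (m : Fin p → ℕ) (hm : ∀ j, 1 ≤ m j)
    (hder : derivative f =
      C (N : ℂ) * (∏ i, (X - C (α i)) ^ (n i - 1)) * ∏ j, (X - C (β j)) ^ m j) :
    (N.factorial : ℝ) * ∏ j, ‖f.eval (β j)‖ ^ m j ≤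
      ∏ i, (((n i).factorial : ℝ) *
        ∏ k ∈ Finset.univ.erase i, ‖α i - α k‖ ^ n k) :=
  stmt7_general α hα n hn N hN f hf β m hder
end

section
/- Let F be a field equipped with a multiplicative nonarchimedean absolute value ‖·‖ (satisfying ‖x+y‖ ≤ max(‖x‖,‖y‖)), let A be a finite nonempty subset of F, and let α₀ ∈ A. Then there exists a function pr : A → A such that: (1) pr(α₀) = α₀ and pr(β) ≠ β for every β ∈ A with β ≠ α₀; (2) for every β ∈ A there exists k ∈ ℕ with pr^[k](β) = α₀; (3) for all α, β, γ ∈ A with β ≠ α₀ and pr(β) = α, one has: ( ∃ k ≥ 1 with pr^[k](γ) = β ) if and only if ( ‖α − β‖ > ‖β − γ‖ and ‖β − γ‖ > 0 ). -/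
/-!
Enumerate `A` starting with `α₀` and let the parent of each later point be the earliest of the
earlier points closest to it. Breaking ties towards early points makes the distance to the
parent increase strictly along every path to the root, so by the ultrametric inequality every
descendant of `β` lies in the punctured ball about `β` of radius `‖pr β - β‖`. Conversely, a
point `γ` of that ball comes after `β` (an earlier point closer to `β` than its parent cannot
exist), and the parent of `γ` is either `β` or again a point of the ball, earlier than `γ`.
-/

open Function

namespace UltrametricTree

variable {ι X : Type*} [LinearOrder ι] [PseudoMetricSpace X]

def notFartherThanEarlier (x : ι → X) (i : ι) : Set ι :=
  {j | ∀ l < i, dist (x j) (x i) ≤ dist (x l) (x i)}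

/-- `i` itself lies in `notFartherThanEarlier x i`, so the minimum exists, and it is `⊥` when
`i = ⊥`. -/
noncomputable def parent [WellFoundedLT ι] (x : ι → X) (i : ι) : ι :=
  wellFounded_lt.min (notFartherThanEarlier x i)
    ⟨i, fun _ _ => (dist_self _).trans_le dist_nonneg⟩

noncomputable def radius [WellFoundedLT ι] (x : ι → X) (i : ι) : ℝ :=
  dist (x (parent x i)) (x i)

section WellFounded

variable [WellFoundedLT ι] (x : ι → X) {i j l : ι}

theorem radius_le_dist (hl : l < i) : radius x i ≤ dist (x l) (x i) :=
  wellFounded_lt.min_mem (notFartherThanEarlier x i) _ l hl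

theorem parent_le_of_forall_dist_le (h : ∀ l < i, dist (x j) (x i) ≤ dist (x l) (x i)) :
    parent x i ≤ j :=
  not_lt.1 (wellFounded_lt.not_lt_min (notFartherThanEarlier x i) h)

theorem parent_bot [OrderBot ι] : parent x ⊥ = ⊥ :=
  le_bot_iff.1 (parent_le_of_forall_dist_le x fun _ hl => absurd hl not_lt_bot)

end WellFounded

section Finite

variable [Finite ι] [OrderBot ι] (x : ι → X) {i g k : ι}

theorem parent_lt (hi : i ≠ ⊥) : parent x i < i := by
  obtain ⟨m, hm, hmin⟩ := Set.exists_min_image (Set.Iio i) (fun l => dist (x l) (x i))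
    (Set.toFinite _) ⟨⊥, bot_lt_iff_ne_bot.2 hi⟩
  exact (parent_le_of_forall_dist_le x fun l hl => hmin l hl).trans_lt hm

theorem exists_iterate_parent_eq_bot (i : ι) : ∃ k, (parent x)^[k] i = ⊥ := by
  induction i using WellFoundedLT.induction with
  | _ i ih =>
    by_cases hi : i = ⊥
    · exact ⟨0, hi⟩
    · obtain ⟨k, hk⟩ := ih _ (parent_lt x hi)
      exact ⟨k + 1, hk⟩

variable [IsUltrametricDist X]

theorem radius_lt_radius_parent (hk : parent x k ≠ ⊥) :
    radius x k < radius x (parent x k) := by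
  set i := parent x k
  by_contra! hle
  have hdist : dist (x (parent x i)) (x k) ≤ radius x k :=
    (dist_triangle_max _ (x i) _).trans (max_le hle le_rfl)
  have := parent_le_of_forall_dist_le x fun l hl => hdist.trans (radius_le_dist x hl)
  exact (parent_lt x hk).not_ge this

theorem radius_lt_radius_of_iterate_parent_eq {n : ℕ} (hi : i ≠ ⊥)
    (h : (parent x)^[n + 1] g = i) : radius x g < radius x i := by
  induction n generalizing g with
  | zero =>
    rw [zero_add, iterate_one] at h
    subst h
    exact radius_lt_radius_parent x hi
  | succ n ih =>
    have hg : parent x g ≠ ⊥ := by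
      rintro hg
      rw [iterate_succ_apply, hg, iterate_fixed (parent_bot x)] at h
      exact hi h.symm
    exact (radius_lt_radius_parent x hg).trans (ih h)

theorem dist_lt_radius_of_iterate_parent_eq {n : ℕ} (hi : i ≠ ⊥)
    (h : (parent x)^[n + 1] g = i) : dist (x i) (x g) < radius x i := by
  induction n generalizing g with
  | zero =>
    rw [zero_add, iterate_one] at h
    subst h
    exact radius_lt_radius_parent x hi
  | succ n ih =>
    calc dist (x i) (x g) ≤ max (dist (x i) (x (parent x g))) (radius x g) :=
          dist_triangle_max _ _ _
      _ < radius x i :=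
          max_lt (ih h) (radius_lt_radius_of_iterate_parent_eq x hi h)

theorem exists_iterate_parent_eq_of_dist_lt_radius (h : dist (x i) (x g) < radius x i)
    (hgi : g ≠ i) : ∃ n, (parent x)^[n + 1] g = i := by
  induction g using WellFoundedLT.induction with
  | _ g ih =>
    have hig : i < g := by
      refine lt_of_le_of_ne (not_lt.1 fun hgi' => ?_) hgi.symm
      exact (radius_le_dist x hgi').not_gt (dist_comm (x g) (x i) ▸ h)
    have hrad : radius x g ≤ dist (x i) (x g) := radius_le_dist x hig
    by_cases hp : parent x g = i
    · exact ⟨0, hp⟩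
    have hdist : dist (x i) (x (parent x g)) < radius x i :=
      ((dist_triangle_max _ (x g) _).trans
        (max_le le_rfl ((dist_comm _ _).trans_le hrad))).trans_lt h
    obtain ⟨n, hn⟩ := ih _ (parent_lt x (bot_le.trans_lt hig).ne') hdist hp
    exact ⟨n + 1, hn⟩

theorem exists_iterate_parent_eq_iff (hi : i ≠ ⊥) :
    (∃ n, (parent x)^[n + 1] g = i) ↔ dist (x i) (x g) < radius x i ∧ g ≠ i := by
  refine ⟨fun ⟨n, hn⟩ => ⟨dist_lt_radius_of_iterate_parent_eq x hi hn, ?_⟩,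
    fun h => exists_iterate_parent_eq_of_dist_lt_radius x h.1 h.2⟩
  rintro rfl
  exact (radius_lt_radius_of_iterate_parent_eq x hi hn).false

end Finite

end UltrametricTree

open UltrametricTree in
theorem exists_ultrametric_tree {Y X : Type*} [Finite Y] [MetricSpace X] [IsUltrametricDist X]
    (f : Y → X) (hf : Injective f) (y₀ : Y) :
    ∃ pr : Y → Y, (pr y₀ = y₀ ∧ ∀ y, y ≠ y₀ → pr y ≠ y) ∧ (∀ y, ∃ k, pr^[k] y = y₀) ∧
      ∀ α β γ, β ≠ y₀ → pr β = α →
        ((∃ k, 1 ≤ k ∧ pr^[k] γ = β) ↔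
          dist (f β) (f γ) < dist (f α) (f β) ∧ 0 < dist (f β) (f γ)) := by
  have : NeZero (Nat.card Y) := ⟨(Nat.card_pos_iff.2 ⟨⟨y₀⟩, ‹_›⟩).ne'⟩
  set e : Y ≃ Fin (Nat.card Y) :=
    (Finite.equivFin Y).trans (Equiv.swap (Finite.equivFin Y y₀) ⊥)
  have he : e y₀ = ⊥ := by simp [e]
  set x := f ∘ e.symm
  have hconj : Semiconj e (e.symm ∘ parent x ∘ e) (parent x) := fun y => by simp
  have hiter (k : ℕ) (y z : Y) :
      (e.symm ∘ parent x ∘ e)^[k] y = z ↔ (parent x)^[k] (e y) = e z := by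
    rw [← (hconj.iterate_right k).eq, e.apply_eq_iff_eq]
  have hne {y : Y} : y ≠ y₀ ↔ e y ≠ ⊥ := by rw [← he, e.injective.ne_iff]
  refine ⟨e.symm ∘ parent x ∘ e, ⟨?_, fun y hy => ?_⟩, fun y => ?_, fun α β γ hβ hα => ?_⟩
  · exact (hiter 1 y₀ y₀).2 (he ▸ parent_bot x)
  · exact fun h => (parent_lt x (hne.1 hy)).ne ((hiter 1 y y).1 h)
  · simpa [hiter, he] using exists_iterate_parent_eq_bot x (e y)
  · have hpos : 0 < dist (f β) (f γ) ↔ e γ ≠ e β := by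
      rw [dist_pos, hf.ne_iff, e.injective.ne_iff, ne_comm]
    calc (∃ k, 1 ≤ k ∧ (e.symm ∘ parent x ∘ e)^[k] γ = β)
        ↔ ∃ n, (parent x)^[n + 1] (e γ) = e β := by
          simp only [hiter]
          exact ⟨fun ⟨k, hk, h⟩ => ⟨k - 1, by rwa [Nat.sub_add_cancel hk]⟩,
            fun ⟨n, h⟩ => ⟨n + 1, n.succ_pos, h⟩⟩
      _ ↔ dist (x (e β)) (x (e γ)) < radius x (e β) ∧ e γ ≠ e β :=
          exists_iterate_parent_eq_iff x (hne.1 hβ)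
      _ ↔ _ := by rw [hpos, radius, ← hα]; simp [x]

theorem WithAbs.dist_toAbs_toAbs {R : Type*} [Ring R] (v : AbsoluteValue R ℝ) (a b : R) :
    dist (WithAbs.toAbs v a) (WithAbs.toAbs v b) = v (a - b) := by
  rw [dist_eq_norm, ← WithAbs.toAbs_sub, WithAbs.norm_toAbs_eq]

/-- Let `F` be a field with a multiplicative nonarchimedean absolute
value, `A ⊆ F` finite nonempty and `α₀ ∈ A`.  There is a parent function `pr : A → A`
encoding a rooted tree with root `α₀`: `α₀` is the unique fixed point, every vertex
reaches `α₀` by iteration, and for `β ≠ α₀` with parent `α`, the descendants of `β`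
are exactly the `γ` with `‖α−β‖ > ‖β−γ‖ > 0`. -/
theorem stmt14 {F : Type*} [Field F] (v : AbsoluteValue F ℝ)
    (hna : ∀ x y : F, v (x + y) ≤ max (v x) (v y))
    (A : Finset F) (α₀ : F) (hα₀ : α₀ ∈ A) :
    ∃ pr : A → A,
      (pr ⟨α₀, hα₀⟩ = ⟨α₀, hα₀⟩ ∧ ∀ β : A, β ≠ ⟨α₀, hα₀⟩ → pr β ≠ β) ∧
      (∀ β : A, ∃ k : ℕ, pr^[k] β = ⟨α₀, hα₀⟩) ∧
      (∀ α β γ : A, β ≠ ⟨α₀, hα₀⟩ → pr β = α →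
        ((∃ k : ℕ, 1 ≤ k ∧ pr^[k] γ = β) ↔
          (v ((β : F) - (γ : F)) < v ((α : F) - (β : F)) ∧
            0 < v ((β : F) - (γ : F))))) := by
  have : IsUltrametricDist (WithAbs v) :=
    IsUltrametricDist.isUltrametricDist_of_isNonarchimedean_norm fun a b => hna a.ofAbs b.ofAbs
  simpa only [WithAbs.dist_toAbs_toAbs] using exists_ultrametric_tree
    (fun a : A => WithAbs.toAbs v a) ((WithAbs.toAbs_injective v).comp Subtype.val_injective)
    ⟨α₀, hα₀⟩
end

section
/- Let K be a field of characteristic zero and α₁, …, α_s ∈ K distinct. Let n = (n₁, …, n_s) ∈ ℕ^s have all coordinates positive, and let ℓ ∈ {1, …, s}. Let A_n be the s×s matrix over K whose i-th row is a_{n−e_i}, and similarly A_{n+e_ℓ}. Let M_{n,ℓ} be the s×s matrix whose (i,j) entry is n_j + (α_i − α_ℓ) if j = i, and n_j otherwise. Then A_{n+e_ℓ} = M_{n,ℓ} · A_n. -/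
/-!
Write `D` for the derivative. Since `f_m` has degree `M`, the polynomial `P_m` is the unique
solution of `P - D P = f_m`, so an identity between the `P`'s may be checked after applying the
injective operator `1 - D`. With `f_n = (X - αᵢ) f_{n-eᵢ}`, `f_{n+e_ℓ-eᵢ} = (X - α_ℓ) f_{n-eᵢ}`
and `D f_n = Σₖ nₖ f_{n-eₖ}` this gives
`P_{n+e_ℓ-eᵢ} = Σₖ nₖ P_{n-eₖ} + (αᵢ - α_ℓ) P_{n-eᵢ} + f_n`,
and evaluating at `αⱼ`, where `f_n` vanishes, yields the `(i, j)` entry of the recurrence.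
-/

open Polynomial

/-- The matrix `A_n` whose `i`-th row is `a_{n−eᵢ}`. -/
noncomputable def Amat {K : Type*} [Field K] {s : ℕ} (α : Fin s → K) (n : Fin s → ℕ) :
    Matrix (Fin s) (Fin s) K :=
  Matrix.of fun i j => aH α (fun k => n k - if k = i then 1 else 0) j

namespace Polynomial

variable {R : Type*} [Ring R]

theorem sub_derivative_injective : Function.Injective fun p : R[X] => p - derivative p := by
  intro p q h
  by_contra hpq
  have hfix : derivative (p - q) = p - q := by
    rw [derivative_sub]
    exact (sub_eq_sub_iff_sub_eq_sub.mp h).symm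
  exact lt_irrefl _ (hfix ▸ degree_derivative_lt (sub_ne_zero.mpr hpq))

theorem sum_iterate_derivative_sub_derivative {p : R[X]} {N : ℕ} (hN : p.natDegree < N) :
    (∑ k ∈ Finset.range N, derivative^[k] p) - derivative (∑ k ∈ Finset.range N, derivative^[k] p)
      = p := by
  rw [derivative_sum, ← Finset.sum_sub_distrib]
  simp only [← Function.iterate_succ_apply' derivative]
  rw [Finset.sum_range_sub' (fun k => derivative^[k] p), Function.iterate_zero_apply,
    iterate_derivative_eq_zero hN, sub_zero]

end Polynomial

section Hermite

variable {K : Type*} [Field K] {s : ℕ} (α : Fin s → K)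

theorem natDegree_fpoly_le (m : Fin s → ℕ) : (fpoly α m).natDegree ≤ ∑ i, m i := by
  refine (natDegree_prod_le _ _).trans (Finset.sum_le_sum fun i _ => ?_)
  rw [natDegree_pow, natDegree_X_sub_C, mul_one]

theorem Ppoly_sub_derivative (m : Fin s → ℕ) :
    Ppoly α m - derivative (Ppoly α m) = fpoly α m :=
  sum_iterate_derivative_sub_derivative (Nat.lt_succ_of_le (natDegree_fpoly_le α m))

theorem fpoly_add_single (m : Fin s → ℕ) (ℓ : Fin s) :
    fpoly α (fun t => m t + if t = ℓ then 1 else 0) = (X - C (α ℓ)) * fpoly α m := by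
  simp only [fpoly, pow_add, Finset.prod_mul_distrib, pow_ite, pow_one, pow_zero,
    Finset.prod_ite_eq', Finset.mem_univ, if_true, mul_comm]

theorem fpoly_eq_mul_fpoly_sub_single {n : Fin s → ℕ} {i : Fin s} (hi : 0 < n i) :
    fpoly α n = (X - C (α i)) * fpoly α (fun t => n t - if t = i then 1 else 0) := by
  rw [← fpoly_add_single]
  congr 1
  funext t
  split_ifs <;> subst_vars <;> omega

theorem derivative_fpoly (n : Fin s → ℕ) :
    derivative (fpoly α n) =
      ∑ k, C (n k : K) * fpoly α (fun t => n t - if t = k then 1 else 0) := by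
  rw [fpoly, derivative_prod_finset]
  refine Finset.sum_congr rfl fun k _ => ?_
  have hrest : ∏ t ∈ Finset.univ.erase k, (X - C (α t)) ^ (n t - if t = k then 1 else 0) =
      ∏ t ∈ Finset.univ.erase k, (X - C (α t)) ^ n t :=
    Finset.prod_congr rfl fun t ht => by rw [if_neg (Finset.ne_of_mem_erase ht), Nat.sub_zero]
  rw [fpoly, ← Finset.mul_prod_erase _ _ (Finset.mem_univ k), if_pos rfl, hrest,
    derivative_X_sub_C_pow]
  ring

theorem eval_fpoly_eq_zero {n : Fin s → ℕ} {j : Fin s} (hj : 0 < n j) :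
    (fpoly α n).eval (α j) = 0 := by
  rw [fpoly, eval_prod]
  exact Finset.prod_eq_zero (Finset.mem_univ j) (by simp [zero_pow hj.ne'])

theorem Ppoly_add_single_sub_single {n : Fin s → ℕ} (ℓ : Fin s) {i : Fin s} (hi : 0 < n i) :
    Ppoly α (fun t => (n t + if t = ℓ then 1 else 0) - if t = i then 1 else 0) =
      (∑ k, C (n k : K) * Ppoly α (fun t => n t - if t = k then 1 else 0)) +
        C (α i - α ℓ) * Ppoly α (fun t => n t - if t = i then 1 else 0) + fpoly α n := by
  have hswap : (fun t => (n t + if t = ℓ then 1 else 0) - if t = i then 1 else 0) =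
      fun t => (n t - if t = i then 1 else 0) + if t = ℓ then 1 else 0 := by
    funext t
    split_ifs <;> subst_vars <;> omega
  have hP (m : Fin s → ℕ) : derivative (Ppoly α m) = Ppoly α m - fpoly α m := by
    rw [← Ppoly_sub_derivative, sub_sub_cancel]
  apply sub_derivative_injective
  simp only [hswap, fpoly_add_single, derivative_add, derivative_sum,
    derivative_mul, derivative_C, zero_mul, zero_add, hP, derivative_fpoly]
  rw [fpoly_eq_mul_fpoly_sub_single α hi]
  simp only [mul_sub, Finset.sum_sub_distrib, map_sub]
  ring

end Hermite

theorem stmt17_general {K : Type*} [Field K] {s : ℕ} (α : Fin s → K)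
    (n : Fin s → ℕ) (hn : ∀ i, 0 < n i) (ℓ : Fin s) :
    Amat α (fun t => n t + if t = ℓ then 1 else 0) =
      (Matrix.of fun i j : Fin s =>
        (n j : K) + if j = i then α i - α ℓ else 0) * Amat α n := by
  have hM : (Matrix.of fun i j : Fin s => (n j : K) + if j = i then α i - α ℓ else 0) =
      Matrix.of (fun _ j => (n j : K)) + Matrix.diagonal fun i => α i - α ℓ := by
    ext i j
    simp [Matrix.diagonal_apply, eq_comm]
  ext i j
  rw [hM, Matrix.add_mul, Matrix.add_apply, Matrix.diagonal_mul, Matrix.mul_apply]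
  simp only [Amat, Matrix.of_apply, aH]
  rw [Ppoly_add_single_sub_single α ℓ (hn i)]
  simp [eval_finsetSum, eval_fpoly_eq_zero α (hn j)]

/-- **Hermite's recurrence.** For `n` with all coordinates positive and
`ℓ ∈ {1,…,s}`, one has `A_{n+e_ℓ} = M_{n,ℓ} · A_n` where `M_{n,ℓ}` has `(i,j)` entry
`n_j + (α_i − α_ℓ)` if `j = i` and `n_j` otherwise. -/
theorem stmt17 {K : Type*} [Field K] [CharZero K] {s : ℕ} (α : Fin s → K)
    (hα : Function.Injective α) (n : Fin s → ℕ) (hn : ∀ i, 0 < n i) (ℓ : Fin s) :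
    Amat α (fun t => n t + if t = ℓ then 1 else 0) =
      (Matrix.of fun i j : Fin s =>
        (n j : K) + if j = i then α i - α ℓ else 0) * Amat α n :=
  stmt17_general α n hn ℓ
end

section
/- Let K be a field of characteristic zero, let α ∈ K be nonzero, and take s = 2 with α₁ = 0 and α₂ = α. For every integer n ≥ 1, the 2×2 matrix [[P_{(n−1,n)}(0), P_{(n−1,n)}(α)], [P_{(n,n−1)}(0), P_{(n,n−1)}(α)]] equals (n−1)! · C_n · C_{n−1} · ⋯ · C_1, where for each i ≥ 1, C_i = [[2i−1−α, 2i−1], [2i−1, 2i−1+α]]. -/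
/-!
With `S p = sumIDeriv p = Σₖ p⁽ᵏ⁾` one has `S (q' - q) = -q`, so `S` kills `q' - q` at every root of
`q`. Both `f_{(m+1,m+2)}` and `f_{(m+2,m+1)}` are of the form `z^{m+1} (z - α)^{m+1} (z - β)`, which
is a combination of `f_{(m,m+1)}` and `f_{(m+1,m)}` modulo such a `q' - q` with `q` a multiple of
`z^{m+1} (z - α)^{m+1}`. Evaluating at `0` and `α` gives the recurrence
`M_{m+1} = (m + 1) C_{m+2} M_m` for the matrix of values `M_m`, and `M_0 = C_1`.
-/

open Polynomial

/-- `f_{(a,b)}(z) = z^a (z − α)^b`. -/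
noncomputable def fm {K : Type*} [Field K] (α : K) (a b : ℕ) : K[X] :=
  X ^ a * (X - C α) ^ b

/-- `P_{(a,b)}(z) = Σ_{k=0}^{a+b} f_{(a,b)}^{(k)}(z)`. -/
noncomputable def Pm {K : Type*} [Field K] (α : K) (a b : ℕ) : K[X] :=
  ∑ k ∈ Finset.range (a + b + 1), derivative^[k] (fm α a b)

/-- The matrix `C_i = [[2i−1−α, 2i−1], [2i−1, 2i−1+α]]`. -/
noncomputable def Cmat {K : Type*} [Field K] (α : K) (i : ℕ) : Matrix (Fin 2) (Fin 2) K :=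
  !![2 * (i : K) - 1 - α, 2 * (i : K) - 1; 2 * (i : K) - 1, 2 * (i : K) - 1 + α]

section SumIDeriv

variable {R : Type*} [CommRing R]

theorem sumIDeriv_derivative_sub_self (p : R[X]) : sumIDeriv (derivative p - p) = -p := by
  have h := sumIDeriv_eq_self_add p
  rw [map_sub, sumIDeriv_derivative]
  linear_combination -h

theorem eval_sumIDeriv_add_derivative_sub_self (p : R[X]) {q : R[X]} {x : R}
    (hq : q.eval x = 0) :
    (sumIDeriv (p + (derivative q - q))).eval x = (sumIDeriv p).eval x := by
  rw [map_add, sumIDeriv_derivative_sub_self, eval_add, eval_neg, hq, neg_zero, add_zero]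

end SumIDeriv

section Recurrence

variable {K : Type*} [Field K]

theorem natDegree_fm_le (α : K) (a b : ℕ) : (fm α a b).natDegree ≤ a + b := by
  unfold fm
  compute_degree

theorem Pm_eq_sumIDeriv (α : K) (a b : ℕ) : Pm α a b = sumIDeriv (fm α a b) :=
  (sumIDeriv_apply_of_le (natDegree_fm_le α a b)).symm

theorem X_pow_mul_X_sub_C_pow_mul_X_sub_C_eq (α β : K) (m : ℕ) :
    X ^ (m + 1) * (X - C α) ^ (m + 1) * (X - C β) =
      (((m : K) + 1) * (2 * m + 3 - β)) • fm α m (m + 1)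
        + (((m : K) + 1) * (2 * m + 3 - β + α)) • fm α (m + 1) m
        + (derivative (-(X ^ (m + 1) * (X - C α) ^ (m + 1) * (X - C β + C (2 * (m : K) + 3))))
          - -(X ^ (m + 1) * (X - C α) ^ (m + 1) * (X - C β + C (2 * (m : K) + 3)))) := by
  simp [fm, derivative_mul, derivative_pow, smul_eq_C_mul, map_ofNat]
  ring

theorem eval_Pm_of_eq_X_pow_mul (α β x : K) (m : ℕ) {a b : ℕ}
    (hab : fm α a b = X ^ (m + 1) * (X - C α) ^ (m + 1) * (X - C β)) (hx : x = 0 ∨ x = α) :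
    (Pm α a b).eval x = (m + 1) * (2 * m + 3 - β) * (Pm α m (m + 1)).eval x
      + (m + 1) * (2 * m + 3 - β + α) * (Pm α (m + 1) m).eval x := by
  rw [Pm_eq_sumIDeriv, hab, X_pow_mul_X_sub_C_pow_mul_X_sub_C_eq,
    eval_sumIDeriv_add_derivative_sub_self _ (by rcases hx with rfl | rfl <;> simp),
    map_add, map_smul, map_smul, eval_add, eval_smul, eval_smul, smul_eq_mul, smul_eq_mul,
    Pm_eq_sumIDeriv, Pm_eq_sumIDeriv]

noncomputable def PmEvalMatrix (α : K) (m : ℕ) : Matrix (Fin 2) (Fin 2) K :=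
  !![(Pm α m (m + 1)).eval 0, (Pm α m (m + 1)).eval α;
     (Pm α (m + 1) m).eval 0, (Pm α (m + 1) m).eval α]

theorem PmEvalMatrix_zero (α : K) : PmEvalMatrix α 0 = Cmat α 1 := by
  have h01 : Pm α 0 1 = X - C α + 1 := by
    simp [Pm, fm, Finset.sum_range_succ, sub_add_eq_add_sub]
  have h10 : Pm α 1 0 = X + 1 := by
    simp [Pm, fm, Finset.sum_range_succ]
  ext i j
  fin_cases i <;> fin_cases j <;> simp [PmEvalMatrix, Cmat, h01, h10] <;> ring

theorem PmEvalMatrix_succ (α : K) (m : ℕ) :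
    PmEvalMatrix α (m + 1) = ((m + 1 : ℕ) : K) • (Cmat α (m + 2) * PmEvalMatrix α m) := by
  have h₁ (x : K) (hx : x = 0 ∨ x = α) := eval_Pm_of_eq_X_pow_mul α α x m
    (a := m + 1) (b := m + 2) (by simp only [fm]; ring) hx
  have h₂ (x : K) (hx : x = 0 ∨ x = α) := eval_Pm_of_eq_X_pow_mul α 0 x m
    (a := m + 2) (b := m + 1) (by simp only [fm, map_zero, sub_zero]; ring) hx
  ext i j
  fin_cases i <;> fin_cases j <;>
    simp [PmEvalMatrix, Cmat, h₁, h₂] <;> ring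

theorem PmEvalMatrix_eq (α : K) (m : ℕ) :
    PmEvalMatrix α m =
      (m.factorial : K) • ((List.range (m + 1)).map fun i => Cmat α (i + 1)).reverse.prod := by
  induction m with
  | zero => simp [PmEvalMatrix_zero]
  | succ m ih =>
    rw [PmEvalMatrix_succ, ih, List.range_succ (n := m + 1), List.map_append, List.reverse_append]
    simp [Nat.factorial_succ, smul_smul]

end Recurrence

theorem stmt18_general {K : Type*} [Field K] (α : K)
    (n : ℕ) (hn : 1 ≤ n) :
    !![(Pm α (n - 1) n).eval 0, (Pm α (n - 1) n).eval α;
       (Pm α n (n - 1)).eval 0, (Pm α n (n - 1)).eval α] =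
      ((n - 1).factorial : K) •
        (((List.range n).map fun i => Cmat α (i + 1)).reverse.prod) := by
  obtain ⟨m, rfl⟩ := Nat.exists_eq_add_of_le' hn
  exact PmEvalMatrix_eq α m

/-- For `s = 2`, `α₁ = 0`, `α₂ = α ≠ 0`, and every `n ≥ 1`:
`[[P_{(n−1,n)}(0), P_{(n−1,n)}(α)], [P_{(n,n−1)}(0), P_{(n,n−1)}(α)]]
  = (n−1)! · C_n C_{n−1} ⋯ C₁`. -/
theorem stmt18 {K : Type*} [Field K] [CharZero K] (α : K) (hα : α ≠ 0)
    (n : ℕ) (hn : 1 ≤ n) :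
    !![(Pm α (n - 1) n).eval 0, (Pm α (n - 1) n).eval α;
       (Pm α n (n - 1)).eval 0, (Pm α n (n - 1)).eval α] =
      ((n - 1).factorial : K) •
        (((List.range n).map fun i => Cmat α (i + 1)).reverse.prod) :=
  stmt18_general α n hn
end
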